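/- arXiv:2604.14404 — 2 statements merged into one kernel-verified Lean document; each statement's English description precedes it below -/
import Mathlib

section
/- Assume the training and aggregation samples are independent and that θ ↦ L_n(θ) is convex. Then, conditional on the training sample, under Assumption 1 there exists an absolute constant C9 > 0 such that for every sufficiently large n, P⋆^(n)( L_n(θ̃^ESA_n) ≤ C9 · { min_{k ∈ [k̃†_n(τ̃*)+1]} L_n(θ̃_{n,k}) + log(M_n n) } ) ≥ 1 − η̃_n − n^{−1}, where τ̃*, C8 are the constants of the sample-splitting not-too-early-stopping theorem and η̃_n := k̃†_n(τ̃*)·exp(−C8·L_n(θ̃_{n,k̃†_n(τ̃*)})). -/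
open MeasureTheory Filter Set ENNReal NNReal

noncomputable section

variable {Θ : Type*} [MeasurableSpace Θ]

open Classical in
/-- The Kullback–Leibler divergence `KL(μ, ν) = ∫ log (dμ/dν) dμ` when `μ ≪ ν` (and the
log-likelihood ratio is `μ`-integrable), and `∞` otherwise. -/
def KL (μ ν : Measure Θ) : ℝ≥0∞ :=
  if μ ≪ ν ∧ Integrable (llr μ ν) μ then ENNReal.ofReal (∫ θ, llr μ ν θ ∂μ) else ⊤

/-- The variational free energy `λ ∫ ℓ dQ + KL(Q, Π)` (valued in `ℝ≥0∞`). -/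
def VFE (lam : ℝ) (loss : Θ → ℝ) (prior Q : Measure Θ) : ℝ≥0∞ :=
  ENNReal.ofReal lam * ∫⁻ θ, ENNReal.ofReal (loss θ) ∂Q + KL Q prior

open Classical in
/-- `exp (-x)` for `x : ℝ≥0∞`, equal to `0` when `x = ∞`. -/
def expNeg (x : ℝ≥0∞) : ℝ := if x = ⊤ then 0 else Real.exp (-x.toReal)

/-- The excess risk of a model with prior `prior`: `- log ∫ exp (-ξ₁ L(θ)) dΠ(θ)`. -/
def modelRisk (ξ1 : ℝ) (L : Θ → ℝ) (prior : Measure Θ) : ℝ :=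
  - Real.log (∫ θ, Real.exp (-(ξ1 * L θ)) ∂prior)

/-- The early-stopping index `inf {k ∈ {2,…,M} : G (k-1) < G k} ∧ M`. -/
def stopIdx {α : Type*} [LT α] (M : ℕ) (G : ℕ → α) : ℕ :=
  sInf ({k | 2 ≤ k ∧ k ≤ M ∧ G (k - 1) < G k} ∪ {M})

/-- The near-optimal index `inf {k ∈ [M] : E k ≤ (1+τ) E (k+1)} ∧ M`. -/
def kdag (M : ℕ) (E : ℕ → ℝ) (τ : ℝ) : ℕ :=
  sInf ({k | 1 ≤ k ∧ k ≤ M ∧ E k ≤ (1 + τ) * E (k + 1)} ∪ {M})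

/-- The index `sup {k ∈ [M], k ≥ kd : E k ≤ (1+ν) Estar} ∨ kd`. -/
def kcirc (M kd : ℕ) (E : ℕ → ℝ) (Estar ν : ℝ) : ℕ :=
  sSup ({k | kd ≤ k ∧ k ≤ M ∧ E k ≤ (1 + ν) * Estar} ∪ {kd})

/-- The minimum `min {E k : k ∈ [m]}`. -/
def minIdx (m : ℕ) (E : ℕ → ℝ) : ℝ := sInf (E '' {k | 1 ≤ k ∧ k ≤ m})

/-- The generalized (Gibbs) posterior with density proportional to `exp (-λ ℓ(θ))`
with respect to `prior`. -/
def gibbs (lam : ℝ) (loss : Θ → ℝ) (prior : Measure Θ) : Measure Θ :=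
  (∫⁻ θ, ENNReal.ofReal (Real.exp (-(lam * loss θ))) ∂prior)⁻¹ •
    prior.withDensity fun θ => ENNReal.ofReal (Real.exp (-(lam * loss θ)))

open Classical in
/-- The `a`-Rényi divergence `(a-1)⁻¹ log ∫ (dμ/dν)^(a-1) dμ` when `μ ≪ ν`, `∞` otherwise. -/
def renyiDiv (a : ℝ) (μ ν : Measure Θ) : ℝ≥0∞ :=
  if μ ≪ ν then
    ENNReal.ofReal ((a - 1)⁻¹ * Real.log (∫ θ, ((μ.rnDeriv ν θ).toReal) ^ (a - 1) ∂μ))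
  else ⊤

/-- The `ε`-covering number of `S` with respect to `h`. -/
def coverNum {Θ : Type*} (h : Θ → Θ → ℝ) (ε : ℝ) (S : Set Θ) : ℝ≥0∞ :=
  ⨅ (T : Finset Θ) (_ : ∀ θ ∈ S, ∃ t ∈ T, h t θ ≤ ε), (T.card : ℝ≥0∞)

end

/-!
Let `k₀` minimise the risk among the first `k̃† + 1` candidates; `η̃ < 1` forces every risk up to
that index to be positive. Off an event of probability at most `1 / n` (Chernoff bounds from
Assumption 1: `M` lower tails and one upper tail for `k₀`, each at level `1 / (2 M n)`), every
candidate of positive risk has excess validation loss above a multiple of its risk minus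
`log (2 M n)`, and that of `k₀` is below a multiple of its risk plus `log (2 M n)`. There the
argument is deterministic: by convexity the risk of the aggregate is at most the Gibbs average of
the risks, hence of the validation losses, and a Gibbs average exceeds the loss of any member of
its family, in particular `k₀` whenever `k₀ ≤ m̃`, by at most `3 log M / α`.
-/

noncomputable def gibbsWeight {ι : Type*} (α : ℝ) (g : ι → ℝ) (U : Finset ι) (k : ι) : ℝ :=
  Real.exp (-(α * g k)) / ∑ j ∈ U, Real.exp (-(α * g j))

section GibbsWeight

variable {ι : Type*} {α : ℝ} {g : ι → ℝ} {U T : Finset ι}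

lemma gibbsWeight_nonneg (k : ι) : 0 ≤ gibbsWeight α g U k := by
  unfold gibbsWeight; positivity

lemma sum_gibbsWeight (hU : U.Nonempty) : ∑ k ∈ U, gibbsWeight α g U k = 1 := by
  unfold gibbsWeight
  rw [← Finset.sum_div, div_self (Finset.sum_pos (fun j _ => Real.exp_pos _) hU).ne']

lemma sum_gibbsWeight_le_one (hTU : T ⊆ U) : ∑ k ∈ T, gibbsWeight α g U k ≤ 1 := by
  rcases U.eq_empty_or_nonempty with rfl | hU
  · simp [Finset.subset_empty.mp hTU]
  · exact (Finset.sum_le_sum_of_subset_of_nonneg hTU fun k _ _ => gibbsWeight_nonneg k).trans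
      (sum_gibbsWeight hU).le

/-- `x ↦ x e^{-x}` is decreasing on `[1, ∞)`; below `y` we simply bound `x` by `y`. -/
lemma mul_exp_neg_le {x y : ℝ} (hy : 1 ≤ y) :
    x * Real.exp (-x) ≤ y * Real.exp (-x) + y * Real.exp (-y) := by
  rcases le_total x y with hxy | hyx
  · nlinarith [Real.exp_pos (-x), Real.exp_pos (-y)]
  · have hxexp : x ≤ y * Real.exp (x - y) := by
      nlinarith [Real.add_one_le_exp (x - y), mul_nonneg (sub_nonneg.mpr hy) (sub_nonneg.mpr hyx)]
    have hsplit : Real.exp (x - y) * Real.exp (-x) = Real.exp (-y) := by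
      rw [← Real.exp_add]; ring_nf
    calc x * Real.exp (-x) ≤ y * Real.exp (x - y) * Real.exp (-x) := by gcongr
      _ = y * Real.exp (-y) := by rw [mul_assoc, hsplit]
      _ ≤ y * Real.exp (-x) + y * Real.exp (-y) := by nlinarith [Real.exp_pos (-x)]

/-- Each term is `c · x e^{-x} / α` with `x = α (g k - g k₁)` and `c = e^{-α g k₁} / Z ≤ 1`;
`mul_exp_neg_le` at `y = 2 log m` splits it into `y / α` times its weight plus `y / (α m²)`. -/
lemma sum_gibbsWeight_mul_sub_le (hα : 0 < α) {m : ℕ} (hm : 2 ≤ m) (hcard : U.card ≤ m)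
    (hTU : T ⊆ U) {k₁ : ι} (hk₁ : k₁ ∈ U) :
    ∑ k ∈ T, gibbsWeight α g U k * (g k - g k₁) ≤ 3 * Real.log m / α := by
  set Z := ∑ j ∈ U, Real.exp (-(α * g j))
  set c := Real.exp (-(α * g k₁)) / Z
  set y := 2 * Real.log m
  have hm' : (2 : ℝ) ≤ m := by exact_mod_cast hm
  have hlogm : 1 / 2 ≤ Real.log m := by
    linarith [Real.log_two_gt_d9, Real.log_le_log (by norm_num) hm']
  have hZ : Real.exp (-(α * g k₁)) ≤ Z :=
    Finset.single_le_sum (fun j _ => (Real.exp_pos (-(α * g j))).le) hk₁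
  have hc : c ≤ 1 := (div_le_one ((Real.exp_pos _).trans_le hZ)).mpr hZ
  have hexpy : Real.exp (-y) = ((m : ℝ) ^ 2)⁻¹ := by
    rw [Real.exp_neg, show y = Real.log ((m : ℝ) ^ 2) by rw [Real.log_pow]; push_cast; ring,
      Real.exp_log (by positivity)]
  have hterm : ∀ k ∈ T, gibbsWeight α g U k * (g k - g k₁)
      ≤ y / α * gibbsWeight α g U k + y / α * ((m : ℝ) ^ 2)⁻¹ := by
    intro k _
    set x := α * (g k - g k₁)
    have hw : gibbsWeight α g U k = c * Real.exp (-x) := by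
      rw [gibbsWeight, div_mul_eq_mul_div, ← Real.exp_add]; congr 2; ring
    have hcy : c * (y * Real.exp (-y)) / α ≤ y / α * Real.exp (-y) :=
      calc c * (y * Real.exp (-y)) / α ≤ 1 * (y * Real.exp (-y)) / α := by gcongr
        _ = y / α * Real.exp (-y) := by ring
    calc gibbsWeight α g U k * (g k - g k₁) = c * (x * Real.exp (-x)) / α := by
          rw [hw]; field_simp; simp only [x]; ring
      _ ≤ c * (y * Real.exp (-x) + y * Real.exp (-y)) / α := by
          gcongr; exact mul_exp_neg_le (by linarith)
      _ = y / α * (c * Real.exp (-x)) + c * (y * Real.exp (-y)) / α := by ring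
      _ ≤ y / α * gibbsWeight α g U k + y / α * ((m : ℝ) ^ 2)⁻¹ := by
          rw [hw, ← hexpy]; linarith
  have hTcard : (T.card : ℝ) ≤ m := by exact_mod_cast (Finset.card_le_card hTU).trans hcard
  have hm2 : (m : ℝ) * ((m : ℝ) ^ 2)⁻¹ ≤ 1 / 2 := by
    rw [sq, mul_inv, ← mul_assoc, mul_inv_cancel₀ (by positivity), one_mul]
    exact inv_le_of_inv_le₀ (by norm_num) (by linarith)
  calc ∑ k ∈ T, gibbsWeight α g U k * (g k - g k₁)
      ≤ ∑ k ∈ T, (y / α * gibbsWeight α g U k + y / α * ((m : ℝ) ^ 2)⁻¹) :=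
        Finset.sum_le_sum hterm
    _ = y / α * ∑ k ∈ T, gibbsWeight α g U k + T.card * (y / α * ((m : ℝ) ^ 2)⁻¹) := by
        rw [Finset.sum_add_distrib, ← Finset.mul_sum, Finset.sum_const, nsmul_eq_mul]
    _ ≤ y / α * 1 + m * (y / α * ((m : ℝ) ^ 2)⁻¹) := by
        gcongr
        exact sum_gibbsWeight_le_one hTU
    _ = y / α * (1 + m * ((m : ℝ) ^ 2)⁻¹) := by ring
    _ ≤ y / α * (1 + 1 / 2) := by gcongr
    _ = 3 * Real.log m / α := by ring

end GibbsWeight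

lemma ConvexOn.map_sum_gibbsWeight_smul_le {ι E : Type*} [AddCommGroup E] [Module ℝ E]
    {f : E → ℝ} (hf : ConvexOn ℝ univ f) (θ : ι → E) {α : ℝ} (hα : 0 < α) {g : ι → ℝ}
    {U : Finset ι} {m : ℕ} (hm : 2 ≤ m) (hcard : U.card ≤ m) {a b : ℝ} (ha : 0 ≤ a)
    {k₀ : ι} (hk₀ : k₀ ∈ U) (hpos : 0 < f (θ k₀))
    (hdom : ∀ k ∈ U, 0 < f (θ k) → f (θ k) ≤ a * g k + b) :
    f (∑ k ∈ U, gibbsWeight α g U k • θ k) ≤ a * g k₀ + b + a * (3 * Real.log m / α) := by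
  set w := gibbsWeight α g U
  set T := U.filter fun k => 0 < f (θ k)
  have hTU : T ⊆ U := Finset.filter_subset _ _
  have hX : 0 ≤ a * g k₀ + b := hpos.le.trans (hdom k₀ hk₀ hpos)
  calc f (∑ k ∈ U, w k • θ k) ≤ ∑ k ∈ U, w k * f (θ k) := by
        simpa using hf.map_sum_le (fun k _ => gibbsWeight_nonneg k) (sum_gibbsWeight ⟨k₀, hk₀⟩)
          (fun k _ => mem_univ (θ k))
    _ ≤ ∑ k ∈ T, w k * f (θ k) := by
        rw [Finset.sum_filter]
        refine Finset.sum_le_sum fun k _ => ?_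
        split_ifs with hk
        · exact le_rfl
        · exact mul_nonpos_of_nonneg_of_nonpos (gibbsWeight_nonneg k) (not_lt.mp hk)
    _ ≤ ∑ k ∈ T, w k * (a * g k + b) := by
        refine Finset.sum_le_sum fun k hk => ?_
        obtain ⟨hkU, hk⟩ := Finset.mem_filter.mp hk
        exact mul_le_mul_of_nonneg_left (hdom k hkU hk) (gibbsWeight_nonneg k)
    _ = a * ∑ k ∈ T, w k * (g k - g k₀) + (∑ k ∈ T, w k) * (a * g k₀ + b) := by
        rw [Finset.mul_sum, Finset.sum_mul, ← Finset.sum_add_distrib]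
        exact Finset.sum_congr rfl fun k _ => by ring
    _ ≤ a * (3 * Real.log m / α) + 1 * (a * g k₀ + b) := by
        gcongr
        · exact sum_gibbsWeight_mul_sub_le hα hm hcard hTU hk₀
        · exact sum_gibbsWeight_le_one hTU
    _ = a * g k₀ + b + a * (3 * Real.log m / α) := by ring

lemma stopIdx_le {α : Type*} [LT α] (M : ℕ) (G : ℕ → α) : stopIdx M G ≤ M :=
  Nat.sInf_le (Or.inr rfl)

lemma exists_minIdx_eq (E : ℕ → ℝ) {m : ℕ} (hm : 1 ≤ m) :
    ∃ k, 1 ≤ k ∧ k ≤ m ∧ minIdx m E = E k := by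
  obtain ⟨k, hk, hmin⟩ := (Finset.Icc 1 m).exists_min_image E ⟨1, Finset.mem_Icc.mpr ⟨le_rfl, hm⟩⟩
  obtain ⟨hk1, hkm⟩ := Finset.mem_Icc.mp hk
  refine ⟨k, hk1, hkm, IsLeast.csInf_eq ⟨⟨k, ⟨hk1, hkm⟩, rfl⟩, ?_⟩⟩
  rintro _ ⟨j, hj, rfl⟩
  exact hmin j (Finset.mem_Icc.mpr hj)

section kdag

variable {M : ℕ} {E : ℕ → ℝ} {τ : ℝ}

lemma kdag_le : kdag M E τ ≤ M :=
  Nat.sInf_le (Or.inr rfl)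

lemma kdag_spec (h : kdag M E τ < M) :
    1 ≤ kdag M E τ ∧ E (kdag M E τ) ≤ (1 + τ) * E (kdag M E τ + 1) := by
  rcases Nat.sInf_mem (⟨M, Or.inr rfl⟩ : ({k | 1 ≤ k ∧ k ≤ M ∧ E k ≤ (1 + τ) * E (k + 1)} ∪ {M}
      : Set ℕ).Nonempty) with ⟨h1, -, hE⟩ | hM
  · exact ⟨h1, hE⟩
  · exact absurd hM h.ne

lemma mul_lt_of_lt_kdag {k : ℕ} (hk1 : 1 ≤ k) (hk : k < kdag M E τ) :
    (1 + τ) * E (k + 1) < E k := by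
  by_contra! hle
  exact Nat.notMem_of_lt_sInf hk (Or.inl ⟨hk1, (hk.trans_le kdag_le).le, hle⟩)

lemma pos_of_le_kdag_succ (hτ : 0 ≤ 1 + τ) (hlt : kdag M E τ < M) (hpos : 0 < E (kdag M E τ))
    {k : ℕ} (hk1 : 1 ≤ k) (hk : k ≤ kdag M E τ + 1) : 0 < E k := by
  rcases Nat.le_succ_iff.mp hk with hk | rfl
  · induction hk using Nat.decreasingInduction with
    | self => exact hpos
    | of_succ j hj ih => nlinarith [mul_lt_of_lt_kdag hk1 hj, ih (by omega) (by omega)]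
  · have := (kdag_spec hlt).2
    by_contra! hle
    nlinarith

lemma exists_minIdx_kdag_succ_eq_pos (hτ : 0 ≤ 1 + τ) {C : ℝ} (hC : 0 < C)
    (hlt : kdag M E τ < M) (hη : kdag M E τ * Real.exp (-(C * E (kdag M E τ))) < 1) :
    ∃ k₀, 1 ≤ k₀ ∧ k₀ ≤ kdag M E τ + 1 ∧ minIdx (kdag M E τ + 1) E = E k₀ ∧ 0 < E k₀ := by
  obtain ⟨hK1, -⟩ := kdag_spec hlt
  have hEK : 0 < E (kdag M E τ) := by
    by_contra! hEK
    have hK1' : (1 : ℝ) ≤ kdag M E τ := by exact_mod_cast hK1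
    nlinarith [Real.one_le_exp (show 0 ≤ -(C * E (kdag M E τ)) by nlinarith)]
  obtain ⟨k₀, hk₀1, hk₀K, hk₀⟩ := exists_minIdx_eq E (Nat.le_add_left 1 (kdag M E τ))
  exact ⟨k₀, hk₀1, hk₀K, hk₀, pos_of_le_kdag_succ hτ hlt hEK hk₀1 hk₀K⟩

end kdag

lemma measureReal_add_le_le_exp_neg {Ω : Type*} [MeasurableSpace Ω] {μ : Measure Ω} {f : Ω → ℝ}
    (hf : AEMeasurable f μ) {a : ℝ}
    (h : ∫⁻ ω, ENNReal.ofReal (Real.exp (f ω)) ∂μ ≤ ENNReal.ofReal (Real.exp a))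
    (t : ℝ) : μ.real {ω | a + t ≤ f ω} ≤ Real.exp (-t) := by
  refine ENNReal.toReal_le_of_le_ofReal (Real.exp_pos _).le ?_
  have hexp : ENNReal.ofReal (Real.exp (a + t)) ≠ 0 := by simpa using Real.exp_pos (a + t)
  calc μ {ω | a + t ≤ f ω}
      ≤ μ {ω | ENNReal.ofReal (Real.exp (a + t)) ≤ ENNReal.ofReal (Real.exp (f ω))} :=
        measure_mono fun ω hω => ENNReal.ofReal_le_ofReal (Real.exp_le_exp.mpr hω)
    _ ≤ (∫⁻ ω, ENNReal.ofReal (Real.exp (f ω)) ∂μ) / ENNReal.ofReal (Real.exp (a + t)) :=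
        meas_ge_le_lintegral_div (by fun_prop) hexp ofReal_ne_top
    _ ≤ ENNReal.ofReal (Real.exp a) / ENNReal.ofReal (Real.exp (a + t)) := by gcongr
    _ = ENNReal.ofReal (Real.exp (-t)) := by
        rw [← ENNReal.ofReal_div_of_pos (Real.exp_pos _), ← Real.exp_sub]; ring_nf

lemma measureReal_tail_events_le {Ω : Type*} [MeasurableSpace Ω] {P : Measure Ω}
    [IsFiniteMeasure P]
    {G : ℕ → Ω → ℝ} {ls : Ω → ℝ} {E : ℕ → ℝ} (hE : ∀ k, E k = ∫ ω, G k ω - ls ω ∂P)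
    {lam ξ1 ξ2 ξ3 : ℝ} {S : Finset ℕ}
    (hlow : ∀ k ∈ S, ∫⁻ ω, ENNReal.ofReal (Real.exp (-(lam * (G k ω - ls ω)))) ∂P
      ≤ ENNReal.ofReal (Real.exp (-(ξ1 * E k))))
    {k₀ : ℕ} (hup : ∫⁻ ω, ENNReal.ofReal (Real.exp (lam * ξ2 * (G k₀ ω - ls ω))) ∂P
      ≤ ENNReal.ofReal (Real.exp (ξ3 * E k₀)))
    (hpos : 0 < E k₀) (t : ℝ) :
    P.real {ω | (∃ k ∈ S, 0 < E k ∧ lam * (G k ω - ls ω) + t ≤ ξ1 * E k)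
        ∨ ξ3 * E k₀ + t ≤ lam * ξ2 * (G k₀ ω - ls ω)}
      ≤ (S.card + 1) * Real.exp (-t) := by
  -- a non-integrable excess loss has Bochner integral `0`, so positive risk gives measurability
  have hmeas : ∀ k, 0 < E k → AEMeasurable (fun ω => G k ω - ls ω) P := fun k hk =>
    (Integrable.of_integral_ne_zero (hE k ▸ hk.ne')).aemeasurable
  have hlow' : ∀ k ∈ S,
      P.real {ω | 0 < E k ∧ lam * (G k ω - ls ω) + t ≤ ξ1 * E k} ≤ Real.exp (-t) := by
    intro k hk
    by_cases hEk : 0 < E k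
    · refine (measureReal_mono fun ω hω => ?_).trans
        (measureReal_add_le_le_exp_neg ((hmeas k hEk).const_mul lam).neg (hlow k hk) t)
      show -(ξ1 * E k) + t ≤ -(lam * (G k ω - ls ω))
      linarith [hω.2]
    · simpa [hEk] using (Real.exp_pos (-t)).le
  have hsplit : {ω | (∃ k ∈ S, 0 < E k ∧ lam * (G k ω - ls ω) + t ≤ ξ1 * E k)
        ∨ ξ3 * E k₀ + t ≤ lam * ξ2 * (G k₀ ω - ls ω)}
      = (⋃ k ∈ S, {ω | 0 < E k ∧ lam * (G k ω - ls ω) + t ≤ ξ1 * E k})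
        ∪ {ω | ξ3 * E k₀ + t ≤ lam * ξ2 * (G k₀ ω - ls ω)} := by
    ext ω; simp only [mem_ofPred_eq, mem_union, mem_iUnion, exists_prop]
  rw [hsplit]
  calc _ ≤ ∑ k ∈ S, P.real {ω | 0 < E k ∧ lam * (G k ω - ls ω) + t ≤ ξ1 * E k}
          + P.real {ω | ξ3 * E k₀ + t ≤ lam * ξ2 * (G k₀ ω - ls ω)} :=
        (measureReal_union_le _ _).trans (add_le_add_left (measureReal_biUnion_finset_le _ _) _)
    _ ≤ ∑ k ∈ S, Real.exp (-t) + Real.exp (-t) :=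
        add_le_add (Finset.sum_le_sum hlow')
          (measureReal_add_le_le_exp_neg ((hmeas k₀ hpos).const_mul (lam * ξ2)) hup t)
    _ = (S.card + 1) * Real.exp (-t) := by rw [Finset.sum_const, nsmul_eq_mul]; ring

lemma ConvexOn.map_sum_gibbsWeight_smul_le_of_tails {Θ : Type*} [AddCommGroup Θ] [Module ℝ Θ]
    {f : Θ → ℝ} (hf : ConvexOn ℝ univ f) (θ : ℕ → Θ) (g : ℕ → ℝ) (c : ℝ)
    {lam ξ1 ξ2 ξ3 α t : ℝ} (hlam : 0 < lam) (hξ1 : 0 < ξ1) (hξ2 : 0 < ξ2) (hα : 0 < α)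
    {m M : ℕ} (hM : 2 ≤ M) (hmM : m ≤ M) {k₀ : ℕ} (hk₀ : k₀ ∈ Finset.Icc 1 m)
    (hpos : 0 < f (θ k₀))
    (hlow : ∀ k ∈ Finset.Icc 1 m, 0 < f (θ k) → ξ1 * f (θ k) < lam * (g k - c) + t)
    (hup : lam * ξ2 * (g k₀ - c) < ξ3 * f (θ k₀) + t) :
    f (∑ k ∈ Finset.Icc 1 m, gibbsWeight α g (Finset.Icc 1 m) k • θ k)
      ≤ ((ξ3 * f (θ k₀) + t) / ξ2 + t) / ξ1 + lam / ξ1 * (3 * Real.log M / α) := by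
  have hdom : ∀ k ∈ Finset.Icc 1 m, 0 < f (θ k) →
      f (θ k) ≤ lam / ξ1 * g k + (t - lam * c) / ξ1 := by
    intro k hk hk0
    rw [div_mul_eq_mul_div, ← add_div, le_div_iff₀ hξ1]
    linarith [hlow k hk hk0]
  have hup' : lam * (g k₀ - c) ≤ (ξ3 * f (θ k₀) + t) / ξ2 := by
    rw [le_div_iff₀ hξ2]; linarith
  calc _ ≤ lam / ξ1 * g k₀ + (t - lam * c) / ξ1 + lam / ξ1 * (3 * Real.log M / α) :=
        hf.map_sum_gibbsWeight_smul_le θ hα hM (by simpa using hmM) (by positivity) hk₀ hpos hdom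
    _ = (lam * (g k₀ - c) + t) / ξ1 + lam / ξ1 * (3 * Real.log M / α) := by ring
    _ ≤ _ := by gcongr

noncomputable def esaConst (lam ξ1 ξ2 ξ3 α : ℝ) : ℝ := (ξ3 + 2) / (ξ1 * ξ2) + (2 + 3 * lam / α) / ξ1

lemma esa_threshold_le {lam ξ1 ξ2 ξ3 α : ℝ} (hlam : 0 < lam) (hξ1 : 0 < ξ1) (hξ2 : 0 < ξ2)
    (hξ3 : 0 < ξ3) (hα : 0 < α) {M n : ℕ} (hM : 2 ≤ M) (hn : 1 ≤ n) {x : ℝ} (hx : 0 ≤ x) :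
    ((ξ3 * x + Real.log (2 * M * n)) / ξ2 + Real.log (2 * M * n)) / ξ1
        + lam / ξ1 * (3 * Real.log M / α)
      ≤ esaConst lam ξ1 ξ2 ξ3 α * (x + Real.log (M * n)) := by
  have hM' : (2 : ℝ) ≤ M := by exact_mod_cast hM
  have hn' : (1 : ℝ) ≤ n := by exact_mod_cast hn
  set Λ := Real.log (M * n)
  have hlogM : Real.log M ≤ Λ := Real.log_le_log (by positivity) (by nlinarith)
  have hlog2 : Real.log 2 ≤ Real.log M := Real.log_le_log (by norm_num) hM'
  have hΛ : 0 ≤ Λ := (Real.log_nonneg (by norm_num)).trans (hlog2.trans hlogM)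
  have ht : Real.log (2 * M * n) ≤ 2 * Λ := by
    rw [mul_assoc, Real.log_mul (by norm_num) (by positivity)]; linarith
  calc _ = ξ3 / (ξ1 * ξ2) * x + (1 / (ξ1 * ξ2) + 1 / ξ1) * Real.log (2 * M * n)
          + 3 * lam / α / ξ1 * Real.log M := by field_simp; ring
    _ ≤ ξ3 / (ξ1 * ξ2) * x + (1 / (ξ1 * ξ2) + 1 / ξ1) * (2 * Λ) + 3 * lam / α / ξ1 * Λ := by
        gcongr
    _ ≤ ξ3 / (ξ1 * ξ2) * x + (1 / (ξ1 * ξ2) + 1 / ξ1) * (2 * Λ) + 3 * lam / α / ξ1 * Λ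
          + (ξ3 / (ξ1 * ξ2) * Λ + (2 / (ξ1 * ξ2) + (2 + 3 * lam / α) / ξ1) * x) :=
        le_add_of_nonneg_right (by positivity)
    _ = esaConst lam ξ1 ξ2 ξ3 α * (x + Λ) := by unfold esaConst; ring

lemma measureReal_le_measureReal_esa_le_add {Ω Θ : Type*} [MeasurableSpace Ω] (P : Measure Ω)
    [IsProbabilityMeasure P] [AddCommGroup Θ] [Module ℝ Θ] {f : Θ → ℝ} (hf : ConvexOn ℝ univ f)
    (θ : ℕ → Θ) (G : ℕ → Ω → ℝ) (ls : Ω → ℝ) (hfG : ∀ k, f (θ k) = ∫ ω, G k ω - ls ω ∂P)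
    {lam ξ1 ξ2 ξ3 α : ℝ} (hlam : 0 < lam) (hξ1 : 0 < ξ1) (hξ2 : 0 < ξ2) (hξ3 : 0 < ξ3)
    (hα : 0 < α) {M n : ℕ} (hM : 2 ≤ M) (hn : 1 ≤ n)
    (hA1 : ∀ k ∈ Finset.Icc 1 M,
      (∫⁻ ω, ENNReal.ofReal (Real.exp (-(lam * (G k ω - ls ω)))) ∂P)
          ≤ ENNReal.ofReal (Real.exp (-(ξ1 * f (θ k)))) ∧
      (∫⁻ ω, ENNReal.ofReal (Real.exp (lam * ξ2 * (G k ω - ls ω))) ∂P)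
          ≤ ENNReal.ofReal (Real.exp (ξ3 * f (θ k))))
    {k₀ : ℕ} (hk₀ : k₀ ∈ Finset.Icc 1 M) (hpos : 0 < f (θ k₀)) (mt : Ω → ℕ)
    (hmt : ∀ ω, mt ω ≤ M) :
    P.real {ω | k₀ ≤ mt ω}
      ≤ P.real {ω | f (∑ k ∈ Finset.Icc 1 (mt ω),
            gibbsWeight α (fun j => G j ω) (Finset.Icc 1 (mt ω)) k • θ k)
          ≤ esaConst lam ξ1 ξ2 ξ3 α * (f (θ k₀) + Real.log (M * n))} + (n : ℝ)⁻¹ := by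
  set t := Real.log (2 * M * n)
  set Bad := {ω | (∃ k ∈ Finset.Icc 1 M, 0 < f (θ k) ∧ lam * (G k ω - ls ω) + t ≤ ξ1 * f (θ k))
    ∨ ξ3 * f (θ k₀) + t ≤ lam * ξ2 * (G k₀ ω - ls ω)}
  have hBad : P.real Bad ≤ (n : ℝ)⁻¹ := by
    refine (measureReal_tail_events_le hfG (fun k hk => (hA1 k hk).1) (hA1 k₀ hk₀).2 hpos t).trans
      ?_
    have hM' : (2 : ℝ) ≤ M := by exact_mod_cast hM
    have hn' : (1 : ℝ) ≤ n := by exact_mod_cast hn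
    rw [Nat.card_Icc, Nat.add_sub_cancel, Real.exp_neg, Real.exp_log (by positivity)]
    field_simp
    nlinarith
  have hsub : {ω | k₀ ≤ mt ω} ⊆ {ω | f (∑ k ∈ Finset.Icc 1 (mt ω),
      gibbsWeight α (fun j => G j ω) (Finset.Icc 1 (mt ω)) k • θ k)
        ≤ esaConst lam ξ1 ξ2 ξ3 α * (f (θ k₀) + Real.log (M * n))} ∪ Bad := by
    intro ω hω
    refine or_iff_not_imp_right.mpr fun hgood => ?_
    simp only [Bad, mem_ofPred_eq, not_or, not_exists, not_and, not_le] at hgood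
    have hlow : ∀ k ∈ Finset.Icc 1 (mt ω), 0 < f (θ k) →
        ξ1 * f (θ k) < lam * (G k ω - ls ω) + t := fun k hk =>
      hgood.1 k (Finset.Icc_subset_Icc_right (hmt ω) hk)
    exact (hf.map_sum_gibbsWeight_smul_le_of_tails θ _ (ls ω) hlam hξ1 hξ2 hα hM (hmt ω)
      (Finset.mem_Icc.mpr ⟨(Finset.mem_Icc.mp hk₀).1, hω⟩) hpos hlow hgood.2).trans
      (esa_threshold_le hlam hξ1 hξ2 hξ3 hα hM hn hpos.le)
  calc _ ≤ _ := measureReal_mono hsub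
    _ ≤ _ := measureReal_union_le _ _
    _ ≤ _ := add_le_add_right hBad _

theorem oracle_ss_esa_general
    {Ω : ℕ → Type*} [∀ n, MeasurableSpace (Ω n)]
    (P : (n : ℕ) → Measure (Ω n)) (hP : ∀ n, IsProbabilityMeasure (P n))
    {Θ : Type*} [MeasurableSpace Θ] [AddCommGroup Θ] [Module ℝ Θ]
    (M : ℕ → ℕ)
    (Θset : ℕ → ℕ → Set Θ)
    (ℓ : (n : ℕ) → Θ → Ω n → ℝ)
    (ℓstar : (n : ℕ) → Ω n → ℝ)
    (lam ξ1 ξ2 ξ3 : ℝ)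
    (hlam : 0 < lam) (hξ1 : 0 < ξ1) (hξ2 : 0 < ξ2) (hξ3 : 0 < ξ3)
    (L : ℕ → Θ → ℝ) (hL : ∀ n θ, L n θ = ∫ ω, (ℓ n θ ω - ℓstar n ω) ∂(P n))
    -- the candidate estimators built from the independent training sample: conditionally
    -- on that sample they are fixed elements of the models
    (θtil : ℕ → ℕ → Θ) (hθtil : ∀ n, ∀ k ∈ Finset.Icc 1 (M n), θtil n k ∈ Θset n k)
    -- Assumption 1
    (hA1 : ∀ᶠ (n : ℕ) in atTop, ∀ k ∈ Finset.Icc 1 (M n), ∀ θ ∈ Θset n k,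
      (∫⁻ ω, ENNReal.ofReal (Real.exp (-(lam * (ℓ n θ ω - ℓstar n ω)))) ∂(P n))
          ≤ ENNReal.ofReal (Real.exp (-(ξ1 * L n θ))) ∧
      (∫⁻ ω, ENNReal.ofReal (Real.exp (lam * ξ2 * (ℓ n θ ω - ℓstar n ω))) ∂(P n))
          ≤ ENNReal.ofReal (Real.exp (ξ3 * L n θ)))
    -- the validation-loss stopping index and the near-optimal index
    (mtil : (n : ℕ) → Ω n → ℕ)
    (hmtil : ∀ n ω, mtil n ω = stopIdx (M n) (fun k => ℓ n (θtil n k) ω))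
    (ktil : ℕ → ℝ → ℕ)
    (hktil : ∀ n τ, ktil n τ = kdag (M n) (fun k => L n (θtil n k)) τ)
    (α : ℝ) (hα : 0 < α)
    (hconv : ∀ n, ConvexOn ℝ Set.univ (L n))
    -- the constants of the sample-splitting not-too-early-stopping theorem
    (τstar C8 : ℝ) (hτstar : 0 < τstar) (hC8 : 0 < C8)
    (η : ℕ → ℝ)
    (hηdef : ∀ n, η n = ktil n τstar * Real.exp (-(C8 * L n (θtil n (ktil n τstar)))))
    (hNTE : ∀ᶠ (n : ℕ) in atTop,
      1 - η n ≤ (P n {ω | ktil n τstar + 1 ≤ mtil n ω}).toReal) :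
    ∃ C9 > (0 : ℝ), ∀ᶠ (n : ℕ) in atTop,
      1 - η n - (n : ℝ)⁻¹
        ≤ (P n {ω |
            L n (∑ k ∈ Finset.Icc 1 (mtil n ω),
              (Real.exp (-(α * ℓ n (θtil n k) ω))
                / ∑ j ∈ Finset.Icc 1 (mtil n ω), Real.exp (-(α * ℓ n (θtil n j) ω)))
                • θtil n k)
              ≤ C9 * (minIdx (ktil n τstar + 1) (fun k => L n (θtil n k))
                  + Real.log ((M n : ℝ) * n))}).toReal := by
  refine ⟨esaConst lam ξ1 ξ2 ξ3 α, by unfold esaConst; positivity, ?_⟩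
  filter_upwards [hA1, hNTE, eventually_ge_atTop 1] with n hA1n hNTEn hn
  have := hP n
  have hηn := hηdef n
  rw [hktil n τstar] at hηn hNTEn ⊢
  set K := kdag (M n) (fun k => L n (θtil n k)) τstar
  simp only [← measureReal_def] at hNTEn ⊢
  rcases le_or_gt (1 - η n - (n : ℝ)⁻¹) 0 with htriv | hη
  · exact htriv.trans measureReal_nonneg
  have hn_inv : (0 : ℝ) ≤ (n : ℝ)⁻¹ := by positivity
  have hmt : ∀ ω, mtil n ω ≤ M n := fun ω => hmtil n ω ▸ stopIdx_le _ _
  obtain ⟨ω, hω⟩ : {ω | K + 1 ≤ mtil n ω}.Nonempty := by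
    by_contra! hempty
    rw [hempty, measureReal_empty] at hNTEn
    linarith
  have hKM : K + 1 ≤ M n := hω.trans (hmt ω)
  have hK1 : 1 ≤ K := (kdag_spec hKM).1
  obtain ⟨k₀, hk₀1, hk₀K, hk₀, hpos⟩ :=
    exists_minIdx_kdag_succ_eq_pos (by linarith) hC8 hKM (by linarith)
  have hcore := measureReal_le_measureReal_esa_le_add (P n) (hconv n) (θtil n)
    (fun k => ℓ n (θtil n k)) (ℓstar n) (fun k => hL n _) hlam hξ1 hξ2 hξ3 hα (by omega) hn
    (fun k hk => hA1n k hk _ (hθtil n k hk)) (Finset.mem_Icc.mpr ⟨hk₀1, by omega⟩) hpos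
    (mtil n) hmt
  have hmono : (P n).real {ω | K + 1 ≤ mtil n ω} ≤ (P n).real {ω | k₀ ≤ mtil n ω} :=
    measureReal_mono fun ω hω => hk₀K.trans hω
  rw [hk₀]
  calc 1 - η n - (n : ℝ)⁻¹ ≤ (P n).real {ω | k₀ ≤ mtil n ω} - (n : ℝ)⁻¹ := by linarith
    _ ≤ _ := sub_le_iff_le_add.mpr hcore

/-- **Oracle inequality for the SS-ESA estimator** (Theorem 10).  Conditionally on the
training sample, if `Lₙ` is convex then under Assumption 1 there is an absolute constant
`C9 > 0` with
`P⋆ⁿ( Lₙ(θ̃ᴱˢᴬₙ) ≤ C9 (min_{k ∈ [k̃†ₙ(τ̃*)+1]} Lₙ(θ̃ₙₖ) + log(Mₙ n)) ) ≥ 1 - η̃ₙ - n⁻¹`. -/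
theorem oracle_ss_esa
    {Ω : ℕ → Type*} [∀ n, MeasurableSpace (Ω n)]
    (P : (n : ℕ) → Measure (Ω n)) (hP : ∀ n, IsProbabilityMeasure (P n))
    {Θ : Type*} [MeasurableSpace Θ] [AddCommGroup Θ] [Module ℝ Θ]
    (M : ℕ → ℕ) (hM : ∀ n, 1 ≤ M n)
    (Θset : ℕ → ℕ → Set Θ) (hnest : ∀ n k, Θset n k ⊆ Θset n (k + 1))
    (ℓ : (n : ℕ) → Θ → Ω n → ℝ) (hℓ : ∀ n θ ω, 0 ≤ ℓ n θ ω)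
    (ℓstar : (n : ℕ) → Ω n → ℝ)
    (lam ξ1 ξ2 ξ3 : ℝ)
    (hlam : 0 < lam) (hξ1 : 0 < ξ1) (hξ2 : 0 < ξ2) (hξ3 : 0 < ξ3)
    (L : ℕ → Θ → ℝ) (hL : ∀ n θ, L n θ = ∫ ω, (ℓ n θ ω - ℓstar n ω) ∂(P n))
    -- the candidate estimators built from the independent training sample: conditionally
    -- on that sample they are fixed elements of the models
    (θtil : ℕ → ℕ → Θ) (hθtil : ∀ n, ∀ k ∈ Finset.Icc 1 (M n), θtil n k ∈ Θset n k)
    -- Assumption 1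
    (hA1 : ∀ᶠ (n : ℕ) in atTop, ∀ k ∈ Finset.Icc 1 (M n), ∀ θ ∈ Θset n k,
      (∫⁻ ω, ENNReal.ofReal (Real.exp (-(lam * (ℓ n θ ω - ℓstar n ω)))) ∂(P n))
          ≤ ENNReal.ofReal (Real.exp (-(ξ1 * L n θ))) ∧
      (∫⁻ ω, ENNReal.ofReal (Real.exp (lam * ξ2 * (ℓ n θ ω - ℓstar n ω))) ∂(P n))
          ≤ ENNReal.ofReal (Real.exp (ξ3 * L n θ)))
    -- the validation-loss stopping index and the near-optimal index
    (mtil : (n : ℕ) → Ω n → ℕ)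
    (hmtil : ∀ n ω, mtil n ω = stopIdx (M n) (fun k => ℓ n (θtil n k) ω))
    (ktil : ℕ → ℝ → ℕ)
    (hktil : ∀ n τ, ktil n τ = kdag (M n) (fun k => L n (θtil n k)) τ)
    (α : ℝ) (hα : 0 < α)
    (hconv : ∀ n, ConvexOn ℝ Set.univ (L n))
    -- the constants of the sample-splitting not-too-early-stopping theorem
    (τstar C8 : ℝ) (hτstar : 0 < τstar) (hC8 : 0 < C8)
    (η : ℕ → ℝ)
    (hηdef : ∀ n, η n = ktil n τstar * Real.exp (-(C8 * L n (θtil n (ktil n τstar)))))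
    (hNTE : ∀ᶠ (n : ℕ) in atTop,
      1 - η n ≤ (P n {ω | ktil n τstar + 1 ≤ mtil n ω}).toReal) :
    ∃ C9 > (0 : ℝ), ∀ᶠ (n : ℕ) in atTop,
      1 - η n - (n : ℝ)⁻¹
        ≤ (P n {ω |
            L n (∑ k ∈ Finset.Icc 1 (mtil n ω),
              (Real.exp (-(α * ℓ n (θtil n k) ω))
                / ∑ j ∈ Finset.Icc 1 (mtil n ω), Real.exp (-(α * ℓ n (θtil n j) ω)))
                • θtil n k)
              ≤ C9 * (minIdx (ktil n τstar + 1) (fun k => L n (θtil n k))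
                  + Real.log ((M n : ℝ) * n))}).toReal :=
  oracle_ss_esa_general P hP M Θset ℓ ℓstar lam ξ1 ξ2 ξ3 hlam hξ1 hξ2 hξ3 L hL θtil hθtil hA1 mtil
    hmtil ktil hktil α hα hconv τstar C8 hτstar hC8 η hηdef hNTE
end

section
/- Let Q and Π be probability measures on a measurable space Θ. Then for any measurable subset B ⊆ Θ and any constant a > 0, Q(B) ≤ (1/a) · ( KL(Q, Π) + e^a · Π(B) ). -/
/-!
With `t = dQ/dΠ`, the functions `t ↦ t log t - t + 1` and `y ↦ eʸ - 1` are convex conjugates, so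
`y t ≤ (t log t - t + 1) + (eʸ - 1)` pointwise. Integrating against `Π` with `y = a · 𝟙_B` gives
`a Q(B) ≤ KL(Q, Π) + (eᵃ - 1) Π(B)`.
-/

open MeasureTheory Filter Set ENNReal NNReal

open Real

namespace InformationTheory

/-- Fenchel–Young for the convex conjugate pair `klFun` and `y ↦ exp y - 1`. -/
lemma mul_le_klFun_add_exp_sub_one {t : ℝ} (ht : 0 ≤ t) (y : ℝ) :
    y * t ≤ klFun t + (exp y - 1) := by
  rcases ht.eq_or_lt with rfl | ht
  · simp [klFun, (exp_pos y).le]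
  have key : t * (y - log t + 1) ≤ exp y := by
    calc t * (y - log t + 1) ≤ t * exp (y - log t) :=
          mul_le_mul_of_nonneg_left (add_one_le_exp _) ht.le
      _ = exp y := by rw [exp_sub, exp_log ht, mul_div_cancel₀ _ ht.ne']
  rw [klFun]
  linarith

section

variable {α : Type*} [MeasurableSpace α] {μ ν : Measure α} [IsFiniteMeasure μ] [IsFiniteMeasure ν]

/-- A Donsker–Varadhan-type change of measure. -/
lemma integral_le_toReal_klDiv_add_integral_exp_sub_one (hμν : μ ≪ ν)
    (h_int : Integrable (llr μ ν) μ) {g : α → ℝ} (hg : Integrable g μ)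
    (hexp : Integrable (fun x ↦ exp (g x) - 1) ν) :
    ∫ x, g x ∂μ ≤ (klDiv μ ν).toReal + ∫ x, (exp (g x) - 1) ∂ν := by
  have h_klFun : Integrable (fun x ↦ klFun (μ.rnDeriv ν x).toReal) ν :=
    (integrable_klFun_rnDeriv_iff hμν).mpr h_int
  calc ∫ x, g x ∂μ = ∫ x, g x * (μ.rnDeriv ν x).toReal ∂ν := by
        simp_rw [mul_comm (g _)]
        exact (integral_rnDeriv_smul hμν).symm
    _ ≤ ∫ x, (klFun (μ.rnDeriv ν x).toReal + (exp (g x) - 1)) ∂ν := by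
        refine integral_mono ?_ (h_klFun.add hexp) fun x ↦
          mul_le_klFun_add_exp_sub_one ENNReal.toReal_nonneg (g x)
        simpa only [smul_eq_mul, mul_comm] using (integrable_rnDeriv_smul_iff hμν).mpr hg
    _ = (klDiv μ ν).toReal + ∫ x, (exp (g x) - 1) ∂ν := by
        rw [integral_add h_klFun hexp, toReal_klDiv_eq_integral_klFun hμν]

lemma mul_measureReal_le_toReal_klDiv_add_mul_measureReal (hμν : μ ≪ ν)
    (h_int : Integrable (llr μ ν) μ) {s : Set α} (hs : MeasurableSet s) (a : ℝ) :
    a * μ.real s ≤ (klDiv μ ν).toReal + (exp a - 1) * ν.real s := by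
  have h_exp : (fun x ↦ exp (s.indicator (fun _ ↦ a) x) - 1) = s.indicator fun _ ↦ exp a - 1 := by
    ext x
    by_cases hx : x ∈ s <;> simp [hx]
  have := integral_le_toReal_klDiv_add_integral_exp_sub_one hμν h_int
    ((integrable_const a).indicator hs) (h_exp ▸ (integrable_const _).indicator hs)
  simpa [h_exp, integral_indicator_const _ hs, mul_comm] using this

end

end InformationTheory

open InformationTheory

lemma KL_eq_klDiv_of_measure_univ_eq {α : Type*} [MeasurableSpace α] {μ ν : Measure α}
    (h : μ univ = ν univ) : KL μ ν = klDiv μ ν := by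
  simp [KL, klDiv_def, measureReal_def, h]

/-- **Probability bound via the Kullback–Leibler divergence** (Lemma 1, Eq. (kl_ineq_prob)).
For probability measures `Q, Π` on a measurable space, any measurable set `B` and any
`a > 0`, `Q(B) ≤ a⁻¹ (KL(Q, Π) + eᵃ Π(B))`. -/
theorem kl_prob_bound
    {Θ : Type*} [MeasurableSpace Θ]
    (Q Pi : Measure Θ) [IsProbabilityMeasure Q] [IsProbabilityMeasure Pi]
    (B : Set Θ) (hB : MeasurableSet B) (a : ℝ) (ha : 0 < a) :
    Q B ≤ ENNReal.ofReal a⁻¹ * (KL Q Pi + ENNReal.ofReal (Real.exp a) * Pi B) := by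
  rw [KL_eq_klDiv_of_measure_univ_eq (by simp)]
  by_cases h_top : klDiv Q Pi = ∞
  · simp [h_top, ha]
  obtain ⟨hac, hint⟩ := klDiv_ne_top_iff.mp h_top
  have h := mul_measureReal_le_toReal_klDiv_add_mul_measureReal hac hint hB a
  rw [← ofReal_measureReal (μ := Q), ← ofReal_measureReal (μ := Pi),
    ← ENNReal.ofReal_toReal h_top, ← ENNReal.ofReal_mul (exp_pos a).le,
    ← ENNReal.ofReal_add toReal_nonneg (by positivity),
    ← ENNReal.ofReal_mul (by positivity)]
  refine ENNReal.ofReal_le_ofReal ((le_inv_mul_iff₀ ha).mpr ?_)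
  linarith [measureReal_nonneg (μ := Pi) (s := B)]
end
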